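/- arXiv:2508.12441 — 2 statements merged into one kernel-verified Lean document; each statement's English description precedes it below -/
import Mathlib

section
/- If W = W(x,y,F) is of class C² on ℝⁿ×ℝᵐ×ℝ^{m×n} and y ∈ C²(Ω;ℝᵐ), then at every point of Ω the pointwise Noether identity W_x(x,y(x),∇y(x)) − div[P*(x,y(x),∇y(x))] = −(∇y(x))ᵀ ( W_y(x,y(x),∇y(x)) − div[P(x,y(x),∇y(x))] ) holds, where the divergences are taken row-wise in x of the composed fields x ↦ P(x,y(x),∇y(x)) and x ↦ P*(x,y(x),∇y(x)). -/
open MeasureTheory Filter Metric Set Topology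

noncomputable section

attribute [local instance] Matrix.normedAddCommGroup Matrix.normedSpace

/-- Euclidean space ℝⁿ. -/
abbrev En (n : ℕ) : Type := EuclideanSpace ℝ (Fin n)

namespace Clap

variable {n m : ℕ}

/-- Euclidean dot product of two vectors, in coordinates. -/
def dotv {k : ℕ} (a b : Fin k → ℝ) : ℝ := ∑ i, a i * b i

/-- Frobenius inner product of matrices ⟨A,B⟩ = ∑ᵢⱼ Aᵢⱼ Bᵢⱼ. -/
def mdot {k l : ℕ} (A B : Matrix (Fin k) (Fin l) ℝ) : ℝ := ∑ i, ∑ j, A i j * B i j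

/-- Partial derivative ∂f/∂xα of a scalar field. -/
def pd (f : En n → ℝ) (x : En n) (α : Fin n) : ℝ :=
  fderiv ℝ f x (EuclideanSpace.single α 1)

/-- Gradient matrix (∇y)ᵢα = ∂yⁱ/∂xα. -/
def gradm (y : En n → Fin m → ℝ) (x : En n) : Matrix (Fin m) (Fin n) ℝ :=
  Matrix.of fun i α => pd (fun x' => y x' i) x α

/-- Gradient matrix computed with derivatives within a set s (one-sided derivatives at ∂s). -/
def gradmW (s : Set (En n)) (y : En n → Fin m → ℝ) (x : En n) : Matrix (Fin m) (Fin n) ℝ :=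
  Matrix.of fun i α => fderivWithin ℝ (fun x' => y x' i) s x (EuclideanSpace.single α 1)

/-- Row-wise divergence (div Q)ᵢ = ∑α ∂Qᵢα/∂xα of a matrix field. -/
def divm (Q : En n → Matrix (Fin m) (Fin n) ℝ) (x : En n) : Fin m → ℝ :=
  fun i => ∑ α, pd (fun x' => Q x' i α) x α

section W

variable (W : En n → (Fin m → ℝ) → Matrix (Fin m) (Fin n) ℝ → ℝ)

/-- Partial gradient of W = W(x,y,F) in x. -/
def Wx (x : En n) (y : Fin m → ℝ) (F : Matrix (Fin m) (Fin n) ℝ) : Fin n → ℝ :=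
  fun α => fderiv ℝ (fun x' => W x' y F) x (EuclideanSpace.single α 1)

/-- Partial gradient of W = W(x,y,F) in y. -/
def Wy (x : En n) (y : Fin m → ℝ) (F : Matrix (Fin m) (Fin n) ℝ) : Fin m → ℝ :=
  fun i => fderiv ℝ (fun y' => W x y' F) y (Pi.single i 1)

/-- Piola stress P = W_F. -/
def Piola (x : En n) (y : Fin m → ℝ) (F : Matrix (Fin m) (Fin n) ℝ) : Matrix (Fin m) (Fin n) ℝ :=
  Matrix.of fun i α => fderiv ℝ (fun F' => W x y F') F (Matrix.single i α 1)

/-- Eshelby tensor P* = W Iₙ - Fᵀ P. -/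
def Esh (x : En n) (y : Fin m → ℝ) (F : Matrix (Fin m) (Fin n) ℝ) : Matrix (Fin n) (Fin n) ℝ :=
  W x y F • (1 : Matrix (Fin n) (Fin n) ℝ) - F.transpose * Piola W x y F

end W

/-- Smoothness of W = W(x,y,F) as a function of all its arguments jointly. -/
def WSmooth (k : ℕ) (W : En n → (Fin m → ℝ) → Matrix (Fin m) (Fin n) ℝ → ℝ) : Prop :=
  ContDiff ℝ k (fun p : En n × (Fin m → ℝ) × Matrix (Fin m) (Fin n) ℝ => W p.1 p.2.1 p.2.2)

/-- φ is a smooth test function compactly supported inside Ω. -/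
def IsTestOn {k : ℕ} (Ω : Set (En n)) (φ : En n → Fin k → ℝ) : Prop :=
  ContDiff ℝ (⊤ : ℕ∞) φ ∧ HasCompactSupport φ ∧ tsupport φ ⊆ Ω

/-- y is an extremal of ∫ W(x,y,∇y): W_y - div P = 0 in the sense of distributions on Ω. -/
def IsExtremal (W : En n → (Fin m → ℝ) → Matrix (Fin m) (Fin n) ℝ → ℝ)
    (Ω : Set (En n)) (y : En n → Fin m → ℝ) : Prop :=
  ∀ φ : En n → Fin m → ℝ, IsTestOn Ω φ →
    ∫ x in Ω, (dotv (Wy W x (y x) (gradm y x)) (φ x)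
      + mdot (Piola W x (y x) (gradm y x)) (gradm φ x)) = 0

/-- y is stationary: an extremal which moreover satisfies W_x - div P* = 0 distributionally. -/
def IsStationary (W : En n → (Fin m → ℝ) → Matrix (Fin m) (Fin n) ℝ → ℝ)
    (Ω : Set (En n)) (y : En n → Fin m → ℝ) : Prop :=
  IsExtremal W Ω y ∧
  ∀ φ : En n → Fin n → ℝ, IsTestOn Ω φ →
    ∫ x in Ω, (dotv (Wx W x (y x) (gradm y x)) (φ x)
      + mdot (Esh W x (y x) (gradm y x)) (gradm φ x)) = 0

/-- (n-1)-dimensional Hausdorff (surface) measure on ℝⁿ. -/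
def sMeas (n : ℕ) : Measure (En n) := μH[(n : ℝ) - 1]

/-- ν is the outward unit normal field on the boundary of Ω. -/
def IsOutwardUnitNormal (Ω : Set (En n)) (ν : En n → En n) : Prop :=
  ∀ x ∈ frontier Ω, ‖ν x‖ = 1 ∧
    ∀ᶠ t in 𝓝[>] (0 : ℝ), x + t • ν x ∉ closure Ω ∧ x - t • ν x ∈ Ω

/-- Piola stress for an energy density depending only on F. -/
def PiolaF (W : Matrix (Fin m) (Fin n) ℝ → ℝ) (F : Matrix (Fin m) (Fin n) ℝ) :
    Matrix (Fin m) (Fin n) ℝ :=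
  Matrix.of fun i α => fderiv ℝ W F (Matrix.single i α 1)

/-- Eshelby tensor for an energy density depending only on F. -/
def EshF (W : Matrix (Fin m) (Fin n) ℝ → ℝ) (F : Matrix (Fin m) (Fin n) ℝ) :
    Matrix (Fin n) (Fin n) ℝ :=
  W F • (1 : Matrix (Fin n) (Fin n) ℝ) - F.transpose * PiolaF W F

/-- Weierstrass excess function 𝓔(F,G) = W(G) - W(F) - ⟨W_F(F), G - F⟩. -/
def Excess (W : Matrix (Fin m) (Fin n) ℝ → ℝ) (F G : Matrix (Fin m) (Fin n) ℝ) : ℝ :=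
  W G - W F - mdot (PiolaF W F) (G - F)

/-- y is an extremal of ∫ W(∇y): div W_F(∇y) = 0 in the sense of distributions on Ω. -/
def IsExtremalF (W : Matrix (Fin m) (Fin n) ℝ → ℝ) (Ω : Set (En n))
    (y : En n → Fin m → ℝ) : Prop :=
  ∀ φ : En n → Fin m → ℝ, IsTestOn Ω φ →
    ∫ x in Ω, mdot (PiolaF W (gradm y x)) (gradm φ x) = 0

/-- y is stationary for ∫ W(∇y): additionally div[W Iₙ - (∇y)ᵀ W_F(∇y)] = 0 distributionally. -/
def IsStationaryF (W : Matrix (Fin m) (Fin n) ℝ → ℝ) (Ω : Set (En n))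
    (y : En n → Fin m → ℝ) : Prop :=
  IsExtremalF W Ω y ∧
  ∀ φ : En n → Fin n → ℝ, IsTestOn Ω φ →
    ∫ x in Ω, mdot (EshF W (gradm y x)) (gradm φ x) = 0

/-- Rank-one convexity: convexity along all rank-one segments. -/
def RankOneConvex (V : Matrix (Fin m) (Fin n) ℝ → ℝ) : Prop :=
  ∀ (F : Matrix (Fin m) (Fin n) ℝ) (b : Fin m → ℝ) (c : Fin n → ℝ),
    ConvexOn ℝ Set.univ (fun t : ℝ => V (F + t • Matrix.vecMulVec b c))

/-- The quasiconvex envelope, via the minimization formula on the unit ball. -/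
def QW (W : Matrix (Fin m) (Fin n) ℝ → ℝ) (F : Matrix (Fin m) (Fin n) ℝ) : ℝ :=
  sInf { t : ℝ | ∃ y : En n → Fin m → ℝ,
    (∃ K, LipschitzOnWith K y (closure (ball (0 : En n) 1))) ∧
    (∀ x ∈ frontier (ball (0 : En n) 1), y x = F.mulVec x) ∧
    t = (∫ x in ball (0 : En n) 1, W (gradm y x)) / (volume (ball (0 : En n) 1)).toReal }

/-- The rank-one convex envelope: the largest rank-one convex function not exceeding W. -/
def RW (W : Matrix (Fin m) (Fin n) ℝ → ℝ) (F : Matrix (Fin m) (Fin n) ℝ) : ℝ :=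
  sSup { t : ℝ | ∃ V : Matrix (Fin m) (Fin n) ℝ → ℝ,
    RankOneConvex V ∧ (∀ G, V G ≤ W G) ∧ t = V F }

/-- Symmetrized gradient (linear strain) e(u) = ½(∇u + (∇u)ᵀ). -/
def esym (u : En n → Fin n → ℝ) (x : En n) : Matrix (Fin n) (Fin n) ℝ :=
  Matrix.of fun i j => (gradm u x i j + gradm u x j i) / 2

/-- Symmetrized gradient computed with derivatives within a set. -/
def esymW (s : Set (En n)) (u : En n → Fin n → ℝ) (x : En n) : Matrix (Fin n) (Fin n) ℝ :=
  Matrix.of fun i j => (gradmW s u x i j + gradmW s u x j i) / 2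

end Clap

namespace Clap

def Wtot (W : En n → (Fin m → ℝ) → Matrix (Fin m) (Fin n) ℝ → ℝ) :
    En n × (Fin m → ℝ) × Matrix (Fin m) (Fin n) ℝ → ℝ := fun p => W p.1 p.2.1 p.2.2

def entCLM (n m : ℕ) (i : Fin m) (α : Fin n) :
    Matrix (Fin m) (Fin n) ℝ →L[ℝ] ℝ :=
  LinearMap.toContinuousLinearMap
    { toFun := fun A => A i α
      map_add' := fun _ _ => rfl
      map_smul' := fun _ _ => rfl }

@[simp] lemma entCLM_apply (n m : ℕ) (i : Fin m) (α : Fin n)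
    (A : Matrix (Fin m) (Fin n) ℝ) : entCLM n m i α A = A i α := rfl

def matCLM (n m : ℕ) : (En n →L[ℝ] (Fin m → ℝ)) →L[ℝ] Matrix (Fin m) (Fin n) ℝ :=
  LinearMap.toContinuousLinearMap
    { toFun := fun T => Matrix.of fun i α => T (EuclideanSpace.single α 1) i
      map_add' := by intros; ext; simp
      map_smul' := by intros; ext; simp }

@[simp] lemma matCLM_apply (n m : ℕ) (T : En n →L[ℝ] (Fin m → ℝ))
    (i : Fin m) (α : Fin n) : matCLM n m T i α = T (EuclideanSpace.single α 1) i := rfl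

-- pd calculus
lemma pd_sub {f g : En n → ℝ} {x : En n}
    (hf : DifferentiableAt ℝ f x) (hg : DifferentiableAt ℝ g x) (α : Fin n) :
    pd (fun x' => f x' - g x') x α = pd f x α - pd g x α := by
  unfold pd; rw [fderiv_fun_sub hf hg]; simp

lemma pd_mul {f g : En n → ℝ} {x : En n}
    (hf : DifferentiableAt ℝ f x) (hg : DifferentiableAt ℝ g x) (α : Fin n) :
    pd (fun x' => f x' * g x') x α = f x * pd g x α + g x * pd f x α := by
  unfold pd; rw [fderiv_fun_mul hf hg]; simp

lemma pd_sum {ι : Type*} (s : Finset ι) {f : ι → En n → ℝ} {x : En n}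
    (hf : ∀ i ∈ s, DifferentiableAt ℝ (f i) x) (α : Fin n) :
    pd (fun x' => ∑ i ∈ s, f i x') x α = ∑ i ∈ s, pd (f i) x α := by
  unfold pd
  rw [(HasFDerivAt.fun_sum (fun i hi => (hf i hi).hasFDerivAt)).fderiv]
  simp

-- sum of singles
lemma sum_single_eq (b : Fin m → ℝ) :
    ∑ i, (b i) • (Pi.single i 1 : Fin m → ℝ) = b := by
  ext j
  simp [Finset.sum_apply, Pi.single_apply, mul_ite]

lemma clm_decomp (ℓ : (En n × (Fin m → ℝ) × Matrix (Fin m) (Fin n) ℝ) →L[ℝ] ℝ)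
    (a : En n) (b : Fin m → ℝ) (C : Matrix (Fin m) (Fin n) ℝ) :
    ℓ (a, b, C) = ℓ (a, 0, 0) + (∑ i, b i * ℓ (0, Pi.single i 1, 0))
      + ∑ i, ∑ γ, C i γ * ℓ (0, 0, Matrix.single i γ 1) := by
  have h1 : ((a, b, C) : En n × (Fin m → ℝ) × Matrix (Fin m) (Fin n) ℝ)
      = (a, 0, 0) + (0, b, 0) + (0, 0, C) := by
    simp [Prod.ext_iff]
  rw [h1, map_add, map_add]
  congr 1
  · congr 1
    -- ℓ (0, b, 0)
    let ℓb : (Fin m → ℝ) →L[ℝ] ℝ :=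
      ℓ.comp ((0 : (Fin m → ℝ) →L[ℝ] En n).prod
        ((ContinuousLinearMap.id ℝ (Fin m → ℝ)).prod 0))
    have hb : ∀ b' : Fin m → ℝ, ℓ (0, b', 0) = ℓb b' := fun _ => rfl
    rw [hb b]
    conv_lhs => rw [← sum_single_eq b]
    rw [map_sum]
    refine Finset.sum_congr rfl fun i _ => ?_
    rw [_root_.map_smul, smul_eq_mul, hb]
  · -- ℓ (0, 0, C)
    let ℓC : Matrix (Fin m) (Fin n) ℝ →L[ℝ] ℝ :=
      ℓ.comp ((0 : Matrix (Fin m) (Fin n) ℝ →L[ℝ] En n).prod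
        ((0 : Matrix (Fin m) (Fin n) ℝ →L[ℝ] (Fin m → ℝ)).prod
          (ContinuousLinearMap.id ℝ (Matrix (Fin m) (Fin n) ℝ))))
    have hC : ∀ C' : Matrix (Fin m) (Fin n) ℝ, ℓ (0, 0, C') = ℓC C' := fun _ => rfl
    have hCsum : C = ∑ i, ∑ γ, (C i γ) • Matrix.single i γ (1 : ℝ) := by
      conv_lhs => rw [Matrix.matrix_eq_sum_single C]
      simp
    rw [hC C]
    conv_lhs => rw [hCsum]
    rw [map_sum]
    refine Finset.sum_congr rfl fun i _ => ?_
    rw [map_sum]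
    refine Finset.sum_congr rfl fun γ _ => ?_
    rw [_root_.map_smul, smul_eq_mul, hC]

variable {W : En n → (Fin m → ℝ) → Matrix (Fin m) (Fin n) ℝ → ℝ}

lemma slice_x (hWd : Differentiable ℝ (Wtot W)) (x : En n) (yv : Fin m → ℝ)
    (F : Matrix (Fin m) (Fin n) ℝ) (v : En n) :
    fderiv ℝ (fun x' => W x' yv F) x v = fderiv ℝ (Wtot W) (x, yv, F) (v, 0, 0) := by
  have hj : HasFDerivAt (fun x' : En n => ((x', yv, F) :
      En n × (Fin m → ℝ) × Matrix (Fin m) (Fin n) ℝ))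
      ((ContinuousLinearMap.id ℝ (En n)).prod 0) x :=
    HasFDerivAt.prodMk (hasFDerivAt_id x) (hasFDerivAt_const (yv, F) x)
  have hc : HasFDerivAt (fun x' => W x' yv F)
      ((fderiv ℝ (Wtot W) (x, yv, F)).comp ((ContinuousLinearMap.id ℝ (En n)).prod 0)) x :=
    by have := (hWd (x, yv, F)).hasFDerivAt.comp x hj; exact this
  rw [hc.fderiv]
  rfl

lemma slice_y (hWd : Differentiable ℝ (Wtot W)) (x : En n) (yv : Fin m → ℝ)
    (F : Matrix (Fin m) (Fin n) ℝ) (b : Fin m → ℝ) :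
    fderiv ℝ (fun y' => W x y' F) yv b = fderiv ℝ (Wtot W) (x, yv, F) (0, b, 0) := by
  have hj : HasFDerivAt (fun y' : Fin m → ℝ => ((x, y', F) :
      En n × (Fin m → ℝ) × Matrix (Fin m) (Fin n) ℝ))
      ((0 : (Fin m → ℝ) →L[ℝ] En n).prod ((ContinuousLinearMap.id ℝ (Fin m → ℝ)).prod 0)) yv :=
    HasFDerivAt.prodMk (hasFDerivAt_const x yv) (HasFDerivAt.prodMk (hasFDerivAt_id yv) (hasFDerivAt_const F yv))
  have hc : HasFDerivAt (fun y' => W x y' F)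
      ((fderiv ℝ (Wtot W) (x, yv, F)).comp
        ((0 : (Fin m → ℝ) →L[ℝ] En n).prod ((ContinuousLinearMap.id ℝ (Fin m → ℝ)).prod 0))) yv :=
    by have := (hWd (x, yv, F)).hasFDerivAt.comp yv hj; exact this
  rw [hc.fderiv]
  rfl

lemma slice_F (hWd : Differentiable ℝ (Wtot W)) (x : En n) (yv : Fin m → ℝ)
    (F : Matrix (Fin m) (Fin n) ℝ) (C : Matrix (Fin m) (Fin n) ℝ) :
    fderiv ℝ (fun F' => W x yv F') F C = fderiv ℝ (Wtot W) (x, yv, F) (0, 0, C) := by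
  have hj : HasFDerivAt (fun F' : Matrix (Fin m) (Fin n) ℝ => ((x, yv, F') :
      En n × (Fin m → ℝ) × Matrix (Fin m) (Fin n) ℝ))
      ((0 : Matrix (Fin m) (Fin n) ℝ →L[ℝ] En n).prod
        ((0 : Matrix (Fin m) (Fin n) ℝ →L[ℝ] (Fin m → ℝ)).prod
          (ContinuousLinearMap.id ℝ (Matrix (Fin m) (Fin n) ℝ)))) F :=
    HasFDerivAt.prodMk (hasFDerivAt_const x F) (HasFDerivAt.prodMk (hasFDerivAt_const yv F) (hasFDerivAt_id F))
  have hc : HasFDerivAt (fun F' => W x yv F')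
      ((fderiv ℝ (Wtot W) (x, yv, F)).comp
        ((0 : Matrix (Fin m) (Fin n) ℝ →L[ℝ] En n).prod
          ((0 : Matrix (Fin m) (Fin n) ℝ →L[ℝ] (Fin m → ℝ)).prod
            (ContinuousLinearMap.id ℝ (Matrix (Fin m) (Fin n) ℝ))))) F :=
    by have := (hWd (x, yv, F)).hasFDerivAt.comp F hj; exact this
  rw [hc.fderiv]
  rfl


/-- If W = W(x,y,F) is of class C² and y ∈ C²(Ω;ℝᵐ), then at every point
of the open set Ω the pointwise Noether identity
  W_x - div P* = -(∇y)ᵀ (W_y - div P)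
holds, the divergences being taken row-wise in x of the composed fields. -/
theorem pointwise_noether_identity
    {n m : ℕ} (Ω : Set (En n)) (hΩ : IsOpen Ω)
    (W : En n → (Fin m → ℝ) → Matrix (Fin m) (Fin n) ℝ → ℝ)
    (hW : WSmooth 2 W)
    (y : En n → Fin m → ℝ) (hy : ContDiffOn ℝ 2 y Ω) :
    ∀ x ∈ Ω,
      Wx W x (y x) (gradm y x)
          - divm (fun x' => Esh W x' (y x') (gradm y x')) x
        = - (gradm y x).transpose.mulVec
            (Wy W x (y x) (gradm y x)
              - divm (fun x' => Piola W x' (y x') (gradm y x')) x) := by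
  intro x₀ hx₀
  classical
  have hΩn : Ω ∈ 𝓝 x₀ := hΩ.mem_nhds hx₀
  have hW' : ContDiff ℝ 2 (Wtot W) := hW
  have hWd : Differentiable ℝ (Wtot W) := hW'.differentiable (by norm_num)
  have hLd : Differentiable ℝ (fun p => fderiv ℝ (Wtot W) p) :=
    (hW'.fderiv_right (m := 1) (by norm_num)).differentiable (by norm_num)
  have hyt : ContDiffAt ℝ 2 y x₀ := hy.contDiffAt hΩn
  have hyΩ : ∀ x' ∈ Ω, DifferentiableAt ℝ y x' := fun x' hx' =>
    (hy.contDiffAt (hΩ.mem_nhds hx')).differentiableAt (by norm_num)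
  have hyd : DifferentiableAt ℝ y x₀ := hyΩ x₀ hx₀
  have hDyd : DifferentiableAt ℝ (fun x' => fderiv ℝ y x') x₀ :=
    (hyt.fderiv_right (m := 1) (by norm_num)).differentiableAt (by norm_num)
  -- gradm agrees with a continuous linear image of fderiv y on Ω
  have hgr : ∀ x' ∈ Ω, gradm y x' = matCLM n m (fderiv ℝ y x') := by
    intro x' hx'
    ext i α
    have h0 := ((ContinuousLinearMap.proj (R := ℝ) (φ := fun _ : Fin m => ℝ)
        i).hasFDerivAt (x := y x')).comp x' (hyΩ x' hx').hasFDerivAt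
    have h : HasFDerivAt (fun x'' => y x'' i)
        ((ContinuousLinearMap.proj i).comp (fderiv ℝ y x')) x' := h0
    simp only [gradm, Matrix.of_apply, pd, matCLM_apply]
    rw [h.fderiv]
    simp
  have hgEq : gradm y =ᶠ[𝓝 x₀] fun x' => matCLM n m (fderiv ℝ y x') := by
    filter_upwards [hΩn] with x' hx' using hgr x' hx'
  have hMcd : DifferentiableAt ℝ (fun x' => matCLM n m (fderiv ℝ y x')) x₀ :=
    ((matCLM n m).differentiable.differentiableAt).comp x₀ hDyd
  have hgd : DifferentiableAt ℝ (gradm y) x₀ := hMcd.congr_of_eventuallyEq hgEq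
  set A : En n →L[ℝ] (En n →L[ℝ] (Fin m → ℝ)) := fderiv ℝ (fun x' => fderiv ℝ y x') x₀ with hAdef
  have hgfd : fderiv ℝ (gradm y) x₀ = (matCLM n m).comp A := by
    rw [hgEq.fderiv_eq]
    exact ((matCLM n m).hasFDerivAt.comp x₀ hDyd.hasFDerivAt).fderiv
  have hsymA : ∀ v w, A v w = A w v := fun v w => (hyt.isSymmSndFDerivAt (by norm_num)) v w
  -- entries of gradm
  have hgEntryEq : ∀ (i : Fin m) (α : Fin n),
      (fun x' => gradm y x' i α) =ᶠ[𝓝 x₀]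
        fun x' => entCLM n m i α (matCLM n m (fderiv ℝ y x')) := by
    intro i α
    filter_upwards [hΩn] with x' hx'
    rw [hgr x' hx']
    rfl
  have hgEntryd : ∀ (i : Fin m) (α : Fin n),
      DifferentiableAt ℝ (fun x' => gradm y x' i α) x₀ := fun i α =>
    ((((entCLM n m i α).differentiable.differentiableAt).comp x₀ hMcd)).congr_of_eventuallyEq
      (hgEntryEq i α)
  have hpdg : ∀ (i : Fin m) (α β : Fin n),
      pd (fun x' => gradm y x' i α) x₀ β
        = A (EuclideanSpace.single β 1) (EuclideanSpace.single α 1) i := by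
    intro i α β
    unfold pd
    rw [(hgEntryEq i α).fderiv_eq]
    have h : HasFDerivAt (fun x' => entCLM n m i α (matCLM n m (fderiv ℝ y x')))
        ((entCLM n m i α).comp ((matCLM n m).comp A)) x₀ :=
      (entCLM n m i α).hasFDerivAt.comp x₀ ((matCLM n m).hasFDerivAt.comp x₀ hDyd.hasFDerivAt)
    rw [h.fderiv]
    simp
  have hg0 : ∀ (i : Fin m) (α : Fin n),
      gradm y x₀ i α = fderiv ℝ y x₀ (EuclideanSpace.single α 1) i := by
    intro i α
    rw [hgr x₀ hx₀]
    simp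
  -- the composed map Φ and the composed energy
  have hΦd : HasFDerivAt (fun x' => ((x', y x', gradm y x') :
      En n × (Fin m → ℝ) × Matrix (Fin m) (Fin n) ℝ))
      ((ContinuousLinearMap.id ℝ (En n)).prod
        ((fderiv ℝ y x₀).prod (fderiv ℝ (gradm y) x₀))) x₀ :=
    HasFDerivAt.prodMk (hasFDerivAt_id x₀) (hyd.hasFDerivAt.prodMk hgd.hasFDerivAt)
  have hWcd : HasFDerivAt (fun x' => W x' (y x') (gradm y x'))
      ((fderiv ℝ (Wtot W) (x₀, y x₀, gradm y x₀)).comp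
        ((ContinuousLinearMap.id ℝ (En n)).prod
          ((fderiv ℝ y x₀).prod (fderiv ℝ (gradm y) x₀)))) x₀ :=
    by have := (hWd (x₀, y x₀, gradm y x₀)).hasFDerivAt.comp x₀ hΦd; exact this
  -- the chain rule for the composed energy, fully decomposed
  have hpdWc : ∀ β : Fin n, pd (fun x' => W x' (y x') (gradm y x')) x₀ β
      = Wx W x₀ (y x₀) (gradm y x₀) β
        + (∑ i, gradm y x₀ i β * Wy W x₀ (y x₀) (gradm y x₀) i)
        + ∑ i, ∑ γ, A (EuclideanSpace.single β 1) (EuclideanSpace.single γ 1) i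
            * Piola W x₀ (y x₀) (gradm y x₀) i γ := by
    intro β
    unfold pd
    rw [hWcd.fderiv]
    have hval : ((fderiv ℝ (Wtot W) (x₀, y x₀, gradm y x₀)).comp
        ((ContinuousLinearMap.id ℝ (En n)).prod
          ((fderiv ℝ y x₀).prod (fderiv ℝ (gradm y) x₀)))) (EuclideanSpace.single β 1)
      = fderiv ℝ (Wtot W) (x₀, y x₀, gradm y x₀)
          (EuclideanSpace.single β 1, fderiv ℝ y x₀ (EuclideanSpace.single β 1),
            fderiv ℝ (gradm y) x₀ (EuclideanSpace.single β 1)) := rfl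
    rw [hval, clm_decomp]
    congr 1
    · congr 1
      · exact (slice_x hWd x₀ (y x₀) (gradm y x₀) (EuclideanSpace.single β 1)).symm
      · refine Finset.sum_congr rfl fun i _ => ?_
        rw [hg0 i β]
        congr 1
        exact (slice_y hWd x₀ (y x₀) (gradm y x₀) (Pi.single i 1)).symm
    · refine Finset.sum_congr rfl fun i _ => Finset.sum_congr rfl fun γ _ => ?_
      rw [hgfd]
      have e1 : ((matCLM n m).comp A) (EuclideanSpace.single β 1) i γ
          = A (EuclideanSpace.single β 1) (EuclideanSpace.single γ 1) i := by simp
      rw [e1, show Piola W x₀ (y x₀) (gradm y x₀) i γ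
          = fderiv ℝ (Wtot W) (x₀, y x₀, gradm y x₀)
              ((0 : En n), (0 : Fin m → ℝ), Matrix.single i γ (1:ℝ)) from
        slice_F hWd x₀ (y x₀) (gradm y x₀) (Matrix.single i γ 1)]
  -- the composed Piola field
  have hPfun : ∀ (i : Fin m) (β : Fin n),
      (fun x' => Piola W x' (y x') (gradm y x') i β)
        = fun x' => fderiv ℝ (Wtot W) (x', y x', gradm y x')
            ((0 : En n), (0 : Fin m → ℝ), Matrix.single i β (1:ℝ)) := by
    intro i β
    funext x'
    exact slice_F hWd x' (y x') (gradm y x') (Matrix.single i β 1)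
  have hPd : ∀ (i : Fin m) (β : Fin n),
      DifferentiableAt ℝ (fun x' => Piola W x' (y x') (gradm y x') i β) x₀ := by
    intro i β
    rw [hPfun i β]
    exact ((ContinuousLinearMap.apply ℝ ℝ
        ((((0 : En n), (0 : Fin m → ℝ), Matrix.single i β (1:ℝ))) :
          En n × (Fin m → ℝ) × Matrix (Fin m) (Fin n) ℝ)).differentiable.differentiableAt).comp
      x₀ ((hLd (x₀, y x₀, gradm y x₀)).comp x₀ hΦd.differentiableAt)
  -- the Eshelby entries
  have hEshEntry : ∀ (α β : Fin n),
      (fun x' => Esh W x' (y x') (gradm y x') α β)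
        = fun x' => W x' (y x') (gradm y x') * (1 : Matrix (Fin n) (Fin n) ℝ) α β
            - ∑ i, gradm y x' i α * Piola W x' (y x') (gradm y x') i β := by
    intro α β
    funext x'
    simp [Esh, Matrix.sub_apply, Matrix.smul_apply, Matrix.mul_apply,
      Matrix.transpose_apply, smul_eq_mul]
  have hdivEsh : ∀ α : Fin n, divm (fun x' => Esh W x' (y x') (gradm y x')) x₀ α
      = pd (fun x' => W x' (y x') (gradm y x')) x₀ α
        - ∑ β, ∑ i, (gradm y x₀ i α
              * pd (fun x' => Piola W x' (y x') (gradm y x') i β) x₀ β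
            + Piola W x₀ (y x₀) (gradm y x₀) i β
              * A (EuclideanSpace.single β 1) (EuclideanSpace.single α 1) i) := by
    intro α
    have hstep : ∀ β : Fin n,
        pd (fun x' => Esh W x' (y x') (gradm y x') α β) x₀ β
          = (1 : Matrix (Fin n) (Fin n) ℝ) α β
              * pd (fun x' => W x' (y x') (gradm y x')) x₀ β
            - ∑ i, (gradm y x₀ i α
                  * pd (fun x' => Piola W x' (y x') (gradm y x') i β) x₀ β
                + Piola W x₀ (y x₀) (gradm y x₀) i β
                  * A (EuclideanSpace.single β 1) (EuclideanSpace.single α 1) i) := by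
      intro β
      rw [hEshEntry α β]
      have h1 : DifferentiableAt ℝ
          (fun x' => W x' (y x') (gradm y x') * (1 : Matrix (Fin n) (Fin n) ℝ) α β) x₀ :=
        hWcd.differentiableAt.mul (differentiableAt_const _)
      have h2 : ∀ i : Fin m, DifferentiableAt ℝ
          (fun x' => gradm y x' i α * Piola W x' (y x') (gradm y x') i β) x₀ :=
        fun i => (hgEntryd i α).mul (hPd i β)
      have h3 : DifferentiableAt ℝ
          (fun x' => ∑ i, gradm y x' i α * Piola W x' (y x') (gradm y x') i β) x₀ :=
        DifferentiableAt.fun_sum fun i _ => h2 i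
      have hz : pd (fun _ : En n => (1 : Matrix (Fin n) (Fin n) ℝ) α β) x₀ β = 0 := by
        unfold pd
        simp
      rw [pd_sub h1 h3 β, pd_mul hWcd.differentiableAt (differentiableAt_const _) β, hz,
        pd_sum Finset.univ (fun i _ => h2 i) β]
      rw [show (∑ i, pd (fun x' => gradm y x' i α * Piola W x' (y x') (gradm y x') i β) x₀ β)
          = ∑ i, (gradm y x₀ i α * pd (fun x' => Piola W x' (y x') (gradm y x') i β) x₀ β
              + Piola W x₀ (y x₀) (gradm y x₀) i β
                * A (EuclideanSpace.single β 1) (EuclideanSpace.single α 1) i) from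
        Finset.sum_congr rfl fun i _ => by
          rw [pd_mul (hgEntryd i α) (hPd i β) β, hpdg i α β]]
      ring
    unfold divm
    rw [Finset.sum_congr rfl fun β _ => hstep β, Finset.sum_sub_distrib]
    congr 1
    simp [Matrix.one_apply]
  -- assembling the identity
  funext α
  simp only [Pi.sub_apply, Pi.neg_apply, Matrix.mulVec, dotProduct,
    Matrix.transpose_apply]
  rw [hdivEsh α, hpdWc α]
  have hT1 : ∑ β : Fin n, ∑ i : Fin m, gradm y x₀ i α
        * pd (fun x' => Piola W x' (y x') (gradm y x') i β) x₀ β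
      = ∑ i : Fin m, gradm y x₀ i α
          * divm (fun x' => Piola W x' (y x') (gradm y x')) x₀ i := by
    rw [Finset.sum_comm]
    refine Finset.sum_congr rfl fun i _ => ?_
    rw [← Finset.mul_sum]
    rfl
  have hT2 : ∑ β : Fin n, ∑ i : Fin m, Piola W x₀ (y x₀) (gradm y x₀) i β
        * A (EuclideanSpace.single β 1) (EuclideanSpace.single α 1) i
      = ∑ i : Fin m, ∑ γ : Fin n,
          A (EuclideanSpace.single α 1) (EuclideanSpace.single γ 1) i
            * Piola W x₀ (y x₀) (gradm y x₀) i γ := by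
    rw [Finset.sum_comm]
    refine Finset.sum_congr rfl fun i _ => Finset.sum_congr rfl fun β _ => ?_
    rw [show A (EuclideanSpace.single β 1) (EuclideanSpace.single α 1) i
        = A (EuclideanSpace.single α 1) (EuclideanSpace.single β 1) i from
      congrFun (hsymA _ _) i, mul_comm]
  simp only [Finset.sum_add_distrib]
  rw [hT1, hT2]
  simp only [mul_sub]
  rw [Finset.sum_sub_distrib]
  ring


end Clap
end
end

section
/- Let W = W(z,F) be of class C¹ on ℝᵐ × ℝ^{m×n}. Then the following are equivalent: (a) W is parametric, i.e. W(z, FA) = W(z,F) det A for all z ∈ ℝᵐ, all F ∈ ℝ^{m×n}, and all A ∈ GL⁺(n) (invertible n×n matrices with positive determinant); (b) the Eshelby tensor P*(z,F) = W(z,F) Iₙ − Fᵀ W_F(z,F) vanishes identically on ℝᵐ × ℝ^{m×n}. -/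
open MeasureTheory Filter Metric Set Topology

noncomputable section

attribute [local instance] Matrix.normedAddCommGroup Matrix.normedSpace

namespace Clap

/-- Piola stress for W = W(z,F). -/
def PiolaZ {n m : ℕ} (W : (Fin m → ℝ) → Matrix (Fin m) (Fin n) ℝ → ℝ)
    (z : Fin m → ℝ) (F : Matrix (Fin m) (Fin n) ℝ) : Matrix (Fin m) (Fin n) ℝ :=
  Matrix.of fun i α => fderiv ℝ (fun F' => W z F') F (Matrix.single i α 1)


section EshelbyAux

variable {n m : ℕ} (W : (Fin m → ℝ) → Matrix (Fin m) (Fin n) ℝ → ℝ)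

theorem aux_diff (hW : ContDiff ℝ 1 (fun p : (Fin m → ℝ) × Matrix (Fin m) (Fin n) ℝ => W p.1 p.2))
    (z : Fin m → ℝ) : Differentiable ℝ (fun G : Matrix (Fin m) (Fin n) ℝ => W z G) :=
  (hW.differentiable one_ne_zero).comp ((differentiable_const z).prodMk differentiable_id)

theorem aux_fderiv_apply (z : Fin m → ℝ) (G H : Matrix (Fin m) (Fin n) ℝ) :
    fderiv ℝ (fun G' => W z G') G H = ∑ i, ∑ α, H i α * PiolaZ W z G i α := by
  have hH : H = ∑ i, ∑ α, H i α • Matrix.single i α (1:ℝ) := by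
    conv_lhs => rw [Matrix.matrix_eq_sum_single H]
    refine Finset.sum_congr rfl fun i _ => Finset.sum_congr rfl fun α _ => ?_
    rw [Matrix.smul_single, smul_eq_mul, mul_one]
  conv_lhs => rw [hH]
  rw [map_sum]
  refine Finset.sum_congr rfl fun i _ => ?_
  rw [map_sum]
  refine Finset.sum_congr rfl fun α _ => ?_
  rw [ContinuousLinearMap.map_smul, smul_eq_mul]
  simp [PiolaZ]

theorem aux_key
    (hEsh : ∀ (z : Fin m → ℝ) (F : Matrix (Fin m) (Fin n) ℝ),
      W z F • (1 : Matrix (Fin n) (Fin n) ℝ) - F.transpose * PiolaZ W z F = 0)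
    (z : Fin m → ℝ) (G : Matrix (Fin m) (Fin n) ℝ) (C : Matrix (Fin n) (Fin n) ℝ) :
    fderiv ℝ (fun G' => W z G') G (G * C) = W z G * C.trace := by
  have hGP : ∀ α β, (∑ i, G i α * PiolaZ W z G i β) = W z G * (if α = β then 1 else 0) := by
    intro α β
    have h := hEsh z G
    rw [sub_eq_zero, ← Matrix.ext_iff] at h
    have h2 := (h α β).symm
    rw [Matrix.mul_apply, Matrix.smul_apply, Matrix.one_apply, smul_eq_mul] at h2
    simpa [Matrix.transpose_apply] using h2
  rw [aux_fderiv_apply]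
  simp only [Matrix.mul_apply, Finset.sum_mul]
  calc ∑ i, ∑ β, ∑ α, G i α * C α β * PiolaZ W z G i β
      = ∑ β, ∑ α, C α β * ∑ i, G i α * PiolaZ W z G i β := by
        rw [Finset.sum_comm]
        refine Finset.sum_congr rfl fun β _ => ?_
        rw [Finset.sum_comm]
        refine Finset.sum_congr rfl fun α _ => ?_
        rw [Finset.mul_sum]
        refine Finset.sum_congr rfl fun i _ => by ring
    _ = ∑ β, ∑ α, C α β * (W z G * (if α = β then 1 else 0)) := by
        refine Finset.sum_congr rfl fun β _ => Finset.sum_congr rfl fun α _ => by rw [hGP]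
    _ = ∑ β, C β β * W z G := by
        refine Finset.sum_congr rfl fun β _ => ?_
        rw [Finset.sum_eq_single β]
        · simp
        · intro α _ hα; simp [hα]
        · simp
    _ = W z G * C.trace := by
        rw [Matrix.trace, Finset.mul_sum]
        exact Finset.sum_congr rfl fun β _ => by rw [Matrix.diag]; ring

theorem aux_hasDerivAt
    (hW : ContDiff ℝ 1 (fun p : (Fin m → ℝ) × Matrix (Fin m) (Fin n) ℝ => W p.1 p.2))
    (z : Fin m → ℝ) (C M : Matrix (Fin m) (Fin n) ℝ) (t : ℝ) :
    HasDerivAt (fun s : ℝ => W z (C + s • M))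
      (fderiv ℝ (fun G' => W z G') (C + t • M) M) t := by
  have h1 : HasDerivAt (fun s : ℝ => C + s • M) M t := by
    exact (((hasDerivAt_id t).smul_const M).const_add C).congr_deriv (one_smul ℝ M)
  exact ((aux_diff W hW z (C + t • M)).hasFDerivAt).comp_hasDerivAt t h1

/-- The diagonal matrix equal to the identity except with `d` at position `(α,α)`. -/
def Dm {n : ℕ} (α : Fin n) (d : ℝ) : Matrix (Fin n) (Fin n) ℝ :=
  1 + (d - 1) • Matrix.single α α 1

theorem Dm_eq_diagonal {n : ℕ} (α : Fin n) (d : ℝ) :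
    Dm α d = Matrix.diagonal (fun i => if i = α then d else 1) := by
  ext i j
  simp only [Dm, Matrix.add_apply, Matrix.smul_apply, Matrix.one_apply,
    Matrix.single, Matrix.of_apply, Matrix.diagonal_apply, smul_eq_mul]
  rcases eq_or_ne i j with rfl | hij
  · rcases eq_or_ne i α with rfl | hia
    · simp
    · simp [Ne.symm hia, hia]
  · have h1 : ¬(α = i ∧ α = j) := by rintro ⟨rfl, rfl⟩; exact hij rfl
    simp [hij, h1]

theorem det_Dm {n : ℕ} (α : Fin n) (d : ℝ) : (Dm α d).det = d := by
  rw [Dm_eq_diagonal, Matrix.det_diagonal]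
  simp [Finset.prod_ite_eq']

theorem Dm_one {n : ℕ} (α : Fin n) : Dm α 1 = 1 := by simp [Dm]

theorem trace_std_same {n : ℕ} (α : Fin n) :
    (Matrix.single α α (1:ℝ)).trace = 1 := by
  simp [Matrix.trace, Matrix.diag, Matrix.single, Finset.sum_ite_eq]

theorem trace_std_ne {n : ℕ} {i j : Fin n} (h : i ≠ j) :
    (Matrix.single i j (1:ℝ)).trace = 0 := by
  rw [Matrix.trace]
  refine Finset.sum_eq_zero fun x _ => ?_
  simp only [Matrix.diag, Matrix.single, Matrix.of_apply]
  refine if_neg ?_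
  rintro ⟨h1, h2⟩
  exact h (h1.trans h2.symm)

theorem mul_std_apply {F : Matrix (Fin m) (Fin n) ℝ} (α β : Fin n) (i : Fin m) (γ : Fin n) :
    (F * Matrix.single α β (1:ℝ)) i γ = if γ = β then F i α else 0 := by
  rw [Matrix.mul_apply]
  by_cases h : γ = β
  · subst h
    rw [if_pos rfl, Finset.sum_eq_single α]
    · simp [Matrix.single]
    · intro δ _ hδ
      simp [Matrix.single, Ne.symm hδ]
    · simp
  · rw [if_neg h]
    refine Finset.sum_eq_zero fun δ _ => ?_
    have hβγ : ¬(α = δ ∧ β = γ) := fun hh => h hh.2.symm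
    simp [Matrix.single, hβγ]

theorem Dm_mul_std {n : ℕ} (α : Fin n) (d : ℝ) :
    Dm α d * Matrix.single α α (1:ℝ) = d • Matrix.single α α (1:ℝ) := by
  rw [Dm, add_mul, one_mul, smul_mul_assoc, Matrix.single_mul_single_same, mul_one,
    sub_smul, one_smul]
  abel

theorem aux_scaling
    (hW : ContDiff ℝ 1 (fun p : (Fin m → ℝ) × Matrix (Fin m) (Fin n) ℝ => W p.1 p.2))
    (hEsh : ∀ (z : Fin m → ℝ) (F : Matrix (Fin m) (Fin n) ℝ),
      W z F • (1 : Matrix (Fin n) (Fin n) ℝ) - F.transpose * PiolaZ W z F = 0)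
    (z : Fin m → ℝ) (F : Matrix (Fin m) (Fin n) ℝ) (α : Fin n) (d : ℝ) :
    W z (F * Dm α d) = W z F * d := by
  set e := Matrix.single α α (1:ℝ) with he
  set M := F * e with hM
  set C := F - M with hC
  have hpath : ∀ d : ℝ, F * Dm α d = C + d • M := by
    intro d
    rw [hC, hM, Dm, Matrix.mul_add, Matrix.mul_one, Matrix.mul_smul, sub_smul, one_smul]
    abel
  set k : ℝ → ℝ := fun d => W z (C + d • M) with hk
  have hder : ∀ t : ℝ, HasDerivAt k (fderiv ℝ (fun G' => W z G') (C + t • M) M) t :=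
    fun t => aux_hasDerivAt W hW z C M t
  have hODE : ∀ d : ℝ, d ≠ 0 → HasDerivAt k (k d * d⁻¹) d := by
    intro d hd
    have harg : (F * Dm α d) * (d⁻¹ • e) = M := by
      rw [Matrix.mul_smul, Matrix.mul_assoc, Dm_mul_std, Matrix.mul_smul, smul_smul,
        inv_mul_cancel₀ hd, one_smul]
    have htr : (d⁻¹ • e).trace = d⁻¹ := by
      rw [Matrix.trace_smul, he, trace_std_same, smul_eq_mul, mul_one]
    have hkey := aux_key W hEsh z (F * Dm α d) (d⁻¹ • e)
    rw [harg, htr, hpath d] at hkey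
    have h := hder d
    rw [hkey] at h
    exact h
  have hmpos : ∀ s : ℝ, HasDerivAt (fun s => k (Real.exp s) * Real.exp (-s)) 0 s := by
    intro s
    have h1 := (hODE _ (Real.exp_ne_zero s)).comp s (Real.hasDerivAt_exp s)
    have h2 : HasDerivAt (fun s : ℝ => Real.exp (-s)) (-Real.exp (-s)) s := by
      simpa [Function.comp_def] using (Real.hasDerivAt_exp (-s)).comp s (hasDerivAt_neg s)
    have h3 := h1.mul h2
    simp only [Function.comp] at h3
    refine h3.congr_deriv ?_
    rw [mul_assoc (k (Real.exp s)) (Real.exp s)⁻¹ (Real.exp s),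
      inv_mul_cancel₀ (Real.exp_ne_zero s), mul_one]
    ring
  have hmneg : ∀ s : ℝ, HasDerivAt (fun s => k (-Real.exp s) * Real.exp (-s)) 0 s := by
    intro s
    have hinner : HasDerivAt (fun s : ℝ => -Real.exp s) (-Real.exp s) s :=
      (Real.hasDerivAt_exp s).neg
    have h1 := (hODE (-Real.exp s) (by simp [Real.exp_ne_zero s])).comp s hinner
    have h2 : HasDerivAt (fun s : ℝ => Real.exp (-s)) (-Real.exp (-s)) s := by
      simpa [Function.comp_def] using (Real.hasDerivAt_exp (-s)).comp s (hasDerivAt_neg s)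
    have h3 := h1.mul h2
    simp only [Function.comp] at h3
    refine h3.congr_deriv ?_
    have hne : -Real.exp s ≠ 0 := by simp [Real.exp_ne_zero s]
    rw [mul_assoc (k (-Real.exp s)) (-Real.exp s)⁻¹ (-Real.exp s),
      inv_mul_cancel₀ hne, mul_one]
    ring
  have hpos : ∀ d : ℝ, 0 < d → k d = k 1 * d := by
    intro d hd
    have hconst := is_const_of_deriv_eq_zero
      (fun s => (hmpos s).differentiableAt) (fun s => (hmpos s).deriv) (Real.log d) 0
    rw [Real.exp_log hd, Real.exp_zero, neg_zero, Real.exp_zero, mul_one] at hconst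
    have : Real.exp (-Real.log d) = d⁻¹ := by rw [Real.exp_neg, Real.exp_log hd]
    rw [this] at hconst
    have h2 := congrArg (fun x => x * d) hconst
    rwa [mul_assoc, inv_mul_cancel₀ (ne_of_gt hd), mul_one] at h2
  have hneg : ∀ d : ℝ, d < 0 → k d = (-(k (-1))) * d := by
    intro d hd
    have hconst := is_const_of_deriv_eq_zero
      (fun s => (hmneg s).differentiableAt) (fun s => (hmneg s).deriv) (Real.log (-d)) 0
    have hdpos : (0:ℝ) < -d := by linarith
    rw [Real.exp_log hdpos, Real.exp_zero, neg_zero, Real.exp_zero, mul_one, neg_neg] at hconst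
    have : Real.exp (-Real.log (-d)) = (-d)⁻¹ := by rw [Real.exp_neg, Real.exp_log hdpos]
    rw [this] at hconst
    have hdne : -d ≠ 0 := ne_of_gt hdpos
    have h2 := congrArg (fun x => x * (-d)) hconst
    rw [mul_assoc, inv_mul_cancel₀ hdne, mul_one] at h2
    rw [h2]; ring
  have hk0 : k 0 = 0 := by
    have h1 : Filter.Tendsto k (nhdsWithin 0 (Set.Ioi 0)) (nhds (k 0)) :=
      ((hder 0).differentiableAt.continuousAt.continuousWithinAt)
    have h2 : Filter.Tendsto k (nhdsWithin 0 (Set.Ioi 0)) (nhds 0) := by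
      have hb : Filter.Tendsto (fun d : ℝ => k 1 * d) (nhdsWithin 0 (Set.Ioi 0)) (nhds 0) := by
        have hcont : Continuous (fun d : ℝ => k 1 * d) := continuous_const.mul continuous_id
        have hle : nhdsWithin (0:ℝ) (Set.Ioi 0) ≤ nhds (0:ℝ) := nhdsWithin_le_nhds
        have := (hcont.tendsto (0:ℝ)).mono_left hle
        simpa using this
      refine Filter.Tendsto.congr' ?_ hb
      filter_upwards [self_mem_nhdsWithin] with d hd
      exact (hpos d hd).symm
    exact tendsto_nhds_unique h1 h2
  have hc : -(k (-1)) = k 1 := by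
    have hIoi : HasDerivWithinAt k (k 1) (Set.Ioi 0) 0 := by
      have hbase : HasDerivAt (fun d : ℝ => k 1 * d) (k 1) 0 := by
        simpa using (hasDerivAt_id (0:ℝ)).const_mul (k 1)
      exact hbase.hasDerivWithinAt.congr (fun x hx => hpos x hx) (by simp [hk0])
    have hIio : HasDerivWithinAt k (-(k (-1))) (Set.Iio 0) 0 := by
      have hbase : HasDerivAt (fun d : ℝ => (-(k (-1))) * d) (-(k (-1))) 0 := by
        simpa using (hasDerivAt_id (0:ℝ)).const_mul (-(k (-1)))
      exact hbase.hasDerivWithinAt.congr (fun x hx => hneg x hx) (by simp [hk0])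
    have e1 := hIoi.derivWithin (uniqueDiffWithinAt_Ioi (0:ℝ))
    have e2 := ((hder 0).hasDerivWithinAt (s := Set.Ioi 0)).derivWithin
      (uniqueDiffWithinAt_Ioi (0:ℝ))
    have e3 := hIio.derivWithin (uniqueDiffWithinAt_Iio (0:ℝ))
    have e4 := ((hder 0).hasDerivWithinAt (s := Set.Iio 0)).derivWithin
      (uniqueDiffWithinAt_Iio (0:ℝ))
    rw [← e1, e2, ← e4, e3]
  have hall : ∀ d : ℝ, k d = k 1 * d := by
    intro d
    rcases lt_trichotomy d 0 with h | h | h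
    · rw [hneg d h, hc]
    · rw [h, hk0, mul_zero]
    · exact hpos d h
  have hk1 : k 1 = W z F := by
    rw [hk]
    show W z (C + (1:ℝ) • M) = W z F
    rw [← hpath 1, Dm_one, Matrix.mul_one]
  calc W z (F * Dm α d) = k d := by rw [hk]; show _ = W z (C + d • M); rw [hpath d]
    _ = k 1 * d := hall d
    _ = W z F * d := by rw [hk1]

theorem aux_transvec
    (hW : ContDiff ℝ 1 (fun p : (Fin m → ℝ) × Matrix (Fin m) (Fin n) ℝ => W p.1 p.2))
    (hEsh : ∀ (z : Fin m → ℝ) (F : Matrix (Fin m) (Fin n) ℝ),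
      W z F • (1 : Matrix (Fin n) (Fin n) ℝ) - F.transpose * PiolaZ W z F = 0)
    (z : Fin m → ℝ) (F : Matrix (Fin m) (Fin n) ℝ)
    (i j : Fin n) (hij : i ≠ j) (c : ℝ) :
    W z (F * Matrix.transvection i j c) = W z F := by
  set e := Matrix.single i j (1:ℝ) with he
  set M := F * e with hM
  set k : ℝ → ℝ := fun s => W z (F + s • M) with hk
  have hpath : ∀ s : ℝ, F * Matrix.transvection i j s = F + s • M := by
    intro s
    rw [Matrix.transvection, Matrix.mul_add, Matrix.mul_one]
    congr 1
    rw [hM, ← Matrix.mul_smul, he, Matrix.smul_single, smul_eq_mul, mul_one]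
  have hder : ∀ s : ℝ, HasDerivAt k (fderiv ℝ (fun G' => W z G') (F + s • M) M) s :=
    fun s => aux_hasDerivAt W hW z F M s
  have hODE : ∀ s : ℝ, fderiv ℝ (fun G' => W z G') (F + s • M) M = 0 := by
    intro s
    have harg : (F + s • M) * e = M := by
      rw [← hpath s, Matrix.mul_assoc]
      have : Matrix.transvection i j s * e = e := by
        rw [Matrix.transvection, add_mul, one_mul, he,
          Matrix.single_mul_single_of_ne (i := i) (j := j) (k := i) (h := hij.symm) (d := (1:ℝ))]
        simp
      rw [this]
    have htr : e.trace = 0 := trace_std_ne hij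
    have hkey := aux_key W hEsh z (F + s • M) e
    rw [harg, htr, mul_zero] at hkey
    exact hkey
  have hconst := is_const_of_deriv_eq_zero
    (fun s => (hder s).differentiableAt)
    (fun s => by rw [(hder s).deriv, hODE s]) c 0
  rw [hpath c]
  simpa [hk] using hconst

theorem aux_diag
    (hW : ContDiff ℝ 1 (fun p : (Fin m → ℝ) × Matrix (Fin m) (Fin n) ℝ => W p.1 p.2))
    (hEsh : ∀ (z : Fin m → ℝ) (F : Matrix (Fin m) (Fin n) ℝ),
      W z F • (1 : Matrix (Fin n) (Fin n) ℝ) - F.transpose * PiolaZ W z F = 0)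
    (D : Fin n → ℝ) (z : Fin m → ℝ) (F : Matrix (Fin m) (Fin n) ℝ) :
    W z (F * Matrix.diagonal D) = W z F * (Matrix.diagonal D).det := by
  suffices h : ∀ s : Finset (Fin n), ∀ F : Matrix (Fin m) (Fin n) ℝ,
      W z (F * Matrix.diagonal (fun i => if i ∈ s then D i else 1)) =
      W z F * (Matrix.diagonal (fun i => if i ∈ s then D i else 1)).det by
    have := h Finset.univ F
    simpa using this
  intro s
  induction s using Finset.induction with
  | empty => intro F; simp
  | @insert a s ha ih =>
    intro F
    have hins : Matrix.diagonal (fun i => if i ∈ insert a s then D i else 1) =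
        Matrix.diagonal (fun i => if i ∈ s then D i else 1) * Dm a (D a) := by
      have hfun : (fun i => if i ∈ insert a s then D i else 1)
          = fun i => (if i ∈ s then D i else 1) * (if i = a then D a else 1) := by
        funext i
        by_cases h1 : i = a
        · subst h1; simp [ha]
        · by_cases h2 : i ∈ s <;> simp [h1, h2]
      rw [hfun, ← Matrix.diagonal_mul_diagonal, ← Dm_eq_diagonal]
    rw [hins, ← Matrix.mul_assoc, aux_scaling W hW hEsh z _ a (D a), ih F,
      Matrix.det_mul, det_Dm, mul_assoc]

end EshelbyAux

/-- For W = W(z,F) of class C¹ the following are equivalent: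
(a) W is parametric: W(z, F A) = W(z,F) det A for all A ∈ GL⁺(n);
(b) the Eshelby tensor P*(z,F) = W Iₙ − Fᵀ W_F vanishes identically. -/
theorem parametric_iff_eshelby_vanishes
    {n m : ℕ}
    (W : (Fin m → ℝ) → Matrix (Fin m) (Fin n) ℝ → ℝ)
    (hW : ContDiff ℝ 1 (fun p : (Fin m → ℝ) × Matrix (Fin m) (Fin n) ℝ => W p.1 p.2)) :
    (∀ (z : Fin m → ℝ) (F : Matrix (Fin m) (Fin n) ℝ) (A : Matrix (Fin n) (Fin n) ℝ),
        0 < A.det → W z (F * A) = W z F * A.det)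
      ↔ (∀ (z : Fin m → ℝ) (F : Matrix (Fin m) (Fin n) ℝ),
          W z F • (1 : Matrix (Fin n) (Fin n) ℝ) - F.transpose * PiolaZ W z F = 0) := by
  constructor
  · intro ha z F
    have hL : ∀ α β : Fin n, fderiv ℝ (fun G' => W z G') F
          (F * Matrix.single α β (1:ℝ))
        = ∑ i, F i α * PiolaZ W z F i β := by
      intro α β
      rw [aux_fderiv_apply]
      refine Finset.sum_congr rfl fun i _ => ?_
      rw [Finset.sum_eq_single β]
      · rw [mul_std_apply, if_pos rfl]
      · intro γ _ hγ
        rw [mul_std_apply, if_neg hγ, zero_mul]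
      · simp
    have hval : ∀ α β : Fin n, fderiv ℝ (fun G' => W z G') F
          (F * Matrix.single α β (1:ℝ))
        = W z F * (if α = β then 1 else 0) := by
      intro α β
      by_cases hab : α = β
      · subst hab
        rw [if_pos rfl, mul_one]
        set M := F * Matrix.single α α (1:ℝ) with hMdef
        have hd := aux_hasDerivAt W hW z F M 0
        have h00 : F + (0:ℝ) • M = F := by simp
        rw [h00] at hd
        have hev : (fun t : ℝ => W z (F + t • M)) =ᶠ[nhds (0:ℝ)]
            (fun t => W z F * (1 + t)) := by
          have hmem : Set.Ioo (-1:ℝ) 1 ∈ nhds (0:ℝ) :=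
            Ioo_mem_nhds (by norm_num) (by norm_num)
          filter_upwards [hmem] with t ht
          have h1 : F + t • M = F * Dm α (1 + t) := by
            rw [Dm, Matrix.mul_add, Matrix.mul_one, Matrix.mul_smul]
            have : (1:ℝ) + t - 1 = t := by ring
            rw [this]
          rw [h1, ha z F (Dm α (1+t)) (by rw [det_Dm]; linarith [ht.1]), det_Dm]
        have hrhs : HasDerivAt (fun t : ℝ => W z F * (1 + t)) (W z F) 0 := by
          simpa using ((hasDerivAt_id (0:ℝ)).const_add 1).const_mul (W z F)
        rw [← hd.deriv, hev.deriv_eq, hrhs.deriv]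
      · rw [if_neg hab, mul_zero]
        set M := F * Matrix.single α β (1:ℝ) with hMdef
        have hd := aux_hasDerivAt W hW z F M 0
        have h00 : F + (0:ℝ) • M = F := by simp
        rw [h00] at hd
        have hconst : ∀ t : ℝ, W z (F + t • M) = W z F := by
          intro t
          have h1 : F + t • M = F * Matrix.transvection α β t := by
            rw [Matrix.transvection, Matrix.mul_add, Matrix.mul_one]
            congr 1
            rw [hMdef, ← Matrix.mul_smul, Matrix.smul_single, smul_eq_mul, mul_one]
          rw [h1, ha z F _ (by rw [Matrix.det_transvection_of_ne α β hab]; norm_num),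
            Matrix.det_transvection_of_ne α β hab, mul_one]
        have hfun : (fun t : ℝ => W z (F + t • M)) = fun _ => W z F := funext hconst
        rw [← hd.deriv, hfun, deriv_const]
    ext α β
    rw [Matrix.sub_apply, Matrix.smul_apply, Matrix.one_apply, Matrix.mul_apply,
      Matrix.zero_apply, smul_eq_mul]
    have h1 := (hval α β).symm.trans (hL α β)
    simp only [Matrix.transpose_apply]
    rw [← h1, sub_self]
  · intro hEsh z F A hdet
    exact Matrix.diagonal_transvection_induction
      (fun B => ∀ (z : Fin m → ℝ) (F : Matrix (Fin m) (Fin n) ℝ),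
        W z (F * B) = W z F * B.det) A
      (fun D _ z F => aux_diag W hW hEsh D z F)
      (fun t z F => by
        obtain ⟨i, j, hij, c⟩ := t
        rw [Matrix.TransvectionStruct.toMatrix_mk,
          aux_transvec W hW hEsh z F i j hij c,
          Matrix.det_transvection_of_ne i j hij, mul_one])
      (fun A B hA hB z F => by
        rw [← Matrix.mul_assoc, hB, hA, Matrix.det_mul, mul_assoc])
      z F

end Clap
end
end
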